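/- arXiv:2506.07224 — 7 statements merged into one kernel-verified Lean document; each statement's English description precedes it below -/
import Mathlib

section
/- Let Θ be an n×n symmetric matrix that, after permuting rows and columns by community labels c: [n]→[K], has block form with (k,l)-block equal to λ^{(k,l)} (λ^{(l,k)})^T, where λ^{(k,l)} ∈ [0,1]^{n_k} is the vector of popularities λ_{il} for nodes i in community k. If for each k the vectors λ^{(k,1)},…,λ^{(k,K)} are linearly independent, then rank(Θ) = K². -/
open Matrix

/-!
Θ factors as `M Nᵀ`, where `M` and `N` are `n × K²` matrices whose `(k, l)` column is
`λ^{(k,l)}` resp. `λ^{(l,k)}`, extended by zero outside community `k` resp. `l`; `N` is `M`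
with its columns permuted. Columns belonging to different communities have disjoint supports,
so the independence hypothesis gives `M` full column rank `K²`; then `Nᵀ` is onto and
`rank (M Nᵀ) = rank M = K²`.
-/

namespace Matrix

variable {m m' n o R : Type*} [Field R] [Fintype n]

theorem rank_eq_card_of_mulVec_injective {A : Matrix m n R} (hA : Function.Injective A.mulVec) :
    A.rank = Fintype.card n := by
  rw [rank, LinearMap.finrank_range_of_inj hA, Module.finrank_fintype_fun_eq_card]

theorem mulVec_submatrix_id_equiv_injective {A : Matrix m n R}
    (hA : Function.Injective A.mulVec) [Fintype o] (e : o ≃ n) :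
    Function.Injective (A.submatrix id e).mulVec := fun x y h => by
  rw [submatrix_mulVec_equiv, submatrix_mulVec_equiv] at h
  exact e.symm.surjective.injective_comp_right (hA h)

theorem rank_mul_transpose_of_mulVec_injective [Fintype m] [Fintype m']
    {A : Matrix m n R} {B : Matrix m' n R}
    (hA : Function.Injective A.mulVec) (hB : Function.Injective B.mulVec) :
    (A * Bᵀ).rank = Fintype.card n := by
  have hBT : LinearMap.range Bᵀ.mulVecLin = ⊤ := by
    apply Submodule.eq_top_of_finrank_eq
    rw [← rank, rank_transpose, rank_eq_card_of_mulVec_injective hB,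
      Module.finrank_fintype_fun_eq_card]
  rw [rank, mulVecLin_mul, LinearMap.range_comp_of_range_eq_top _ hBT, ← rank,
    rank_eq_card_of_mulVec_injective hA]

end Matrix

section CommunityFactor

variable {ι κ μ R : Type*} [Fintype κ] [Fintype μ] [DecidableEq κ] [CommRing R]

/-- Column `(k, l)` is `λ^{(k,l)}`, extended by zero outside community `k`. -/
def communityFactor (c : ι → κ) (Λ : Matrix ι μ R) : Matrix ι (κ × μ) R :=
  of fun i p => if c i = p.1 then Λ i p.2 else 0

theorem communityFactor_mulVec (c : ι → κ) (Λ : Matrix ι μ R) (x : κ × μ → R) (i : ι) :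
    (communityFactor c Λ *ᵥ x) i = ∑ l, Λ i l * x (c i, l) := by
  simp [communityFactor, mulVec, dotProduct, Fintype.sum_prod_type, ite_mul]

theorem communityFactor_mulVec_injective [Fintype ι] {c : ι → κ} {Λ : Matrix ι μ R}
    (hind : ∀ k, LinearIndependent R fun l => fun i : {i // c i = k} => Λ i.1 l) :
    Function.Injective (communityFactor c Λ).mulVec := by
  refine (injective_iff_map_eq_zero (communityFactor c Λ).mulVecLin).2 fun x hx => ?_
  ext ⟨k, l⟩
  refine Fintype.linearIndependent_iff.1 (hind k) (fun l => x (k, l)) ?_ l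
  ext ⟨i, rfl⟩
  simpa [communityFactor_mulVec, mul_comm] using congrFun hx i

end CommunityFactor

theorem pabm_rank_eq_K_sq_general (n K : ℕ)
    (Λ : Matrix (Fin n) (Fin K) ℝ) (c : Fin n → Fin K)
    (Θ : Matrix (Fin n) (Fin n) ℝ)
    (hΘ : ∀ i j, Θ i j = Λ i (c j) * Λ j (c i))
    (hind : ∀ k : Fin K,
      LinearIndependent ℝ (fun l : Fin K => fun i : {i : Fin n // c i = k} => Λ i.1 l)) :
    Θ.rank = K ^ 2 := by
  set M := communityFactor c Λ
  have hM : Function.Injective M.mulVec := communityFactor_mulVec_injective hind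
  have hfactor : Θ = M * (M.submatrix id (Equiv.prodComm _ _))ᵀ := by
    ext i j
    simp [hΘ, M, communityFactor, mul_apply, Fintype.sum_prod_type, mul_comm]
  rw [hfactor, rank_mul_transpose_of_mulVec_injective hM
    (mulVec_submatrix_id_equiv_injective hM _), Fintype.card_prod,
    Fintype.card_fin, sq]

/-- PABM: if for each community `k` the popularity vectors `λ^{(k,1)},…,λ^{(k,K)}`
(restricted to community `k`) are linearly independent, then `rank Θ = K²`. -/
theorem pabm_rank_eq_K_sq (n K : ℕ) (hK : 0 < K)
    (Λ : Matrix (Fin n) (Fin K) ℝ) (c : Fin n → Fin K)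
    (hΛ : ∀ i l, Λ i l ∈ Set.Icc (0 : ℝ) 1)
    (hne : ∀ k : Fin K, ∃ i, c i = k)
    (Θ : Matrix (Fin n) (Fin n) ℝ)
    (hΘ : ∀ i j, Θ i j = Λ i (c j) * Λ j (c i))
    (hind : ∀ k : Fin K,
      LinearIndependent ℝ (fun l : Fin K => fun i : {i : Fin n // c i = k} => Λ i.1 l)) :
    Θ.rank = K ^ 2 :=
  pabm_rank_eq_K_sq_general n K Λ c Θ hΘ hind
end

section
/- Let Θ be the PABM edge probability matrix with rank K², and let Ξ ∈ R^{n×K²} be a matrix of orthonormal eigenvectors of Θ spanning its column space (the eigenvectors for the K² nonzero eigenvalues). For each community k let Ξ^{(k)} be the rows of Ξ indexed by nodes in community k, and Λ^{(k,·)} = (λ_{il})_{i: c(i)=k, l∈[K]}. Then for each k ∈ [K] there exists a matrix Z_k ∈ R^{K×K²} such that Ξ^{(k)} = Λ^{(k,·)} Z_k, Z_k Z_l^T = 0 for all l ≠ k, and Z_k Z_k^T = ((Λ^{(k,·)})^T Λ^{(k,·)})^{-1}. -/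
open Matrix

/-- The submatrix of `Λ` on community `k` (rows `i` with `c i = k`). -/
def commBlock (n K : ℕ) (Λ : Matrix (Fin n) (Fin K) ℝ) (c : Fin n → Fin K) (k : Fin K) :
    Matrix {i : Fin n // c i = k} (Fin K) ℝ :=
  Matrix.of fun i l => Λ i.1 l

/-- Proposition 1: structure of the eigenvector matrix of the PABM. -/
theorem pabm_eigenvector_structure (n K : ℕ) (hK : 0 < K)
    (Λ : Matrix (Fin n) (Fin K) ℝ) (c : Fin n → Fin K)
    (Θ : Matrix (Fin n) (Fin n) ℝ)
    (hΘ : ∀ i j, Θ i j = Λ i (c j) * Λ j (c i))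
    (hrank : Θ.rank = K ^ 2)
    (Ξ : Matrix (Fin n) (Fin (K ^ 2)) ℝ)
    (D : Matrix (Fin (K ^ 2)) (Fin (K ^ 2)) ℝ)
    (hdiag : ∀ u v, u ≠ v → D u v = 0) (hnz : ∀ u, D u u ≠ 0)
    (horth : Ξᵀ * Ξ = 1)
    (hdecomp : Θ = Ξ * D * Ξᵀ) :
    ∃ Z : Fin K → Matrix (Fin K) (Fin (K ^ 2)) ℝ,
      (∀ k : Fin K, ∀ i : Fin n, c i = k → ∀ u, Ξ i u = ∑ l, Λ i l * Z k l u) ∧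
      (∀ k l : Fin K, l ≠ k → Z k * (Z l)ᵀ = 0) ∧
      (∀ k : Fin K,
        Z k * (Z k)ᵀ = ((commBlock n K Λ c k)ᵀ * commBlock n K Λ c k)⁻¹) := by
  classical
  obtain ⟨e, -⟩ : ∃ _ : Fin K × Fin K ≃ Fin (K ^ 2), True :=
    ⟨finProdFinEquiv.trans (finCongr (pow_two K).symm), trivial⟩
  -- the explicit inverse of D
  obtain ⟨E, hE⟩ : ∃ E : Matrix (Fin (K ^ 2)) (Fin (K ^ 2)) ℝ,
      E = Matrix.of (fun u v => if u = v then (D u u)⁻¹ else 0) := ⟨_, rfl⟩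
  have hDE : D * E = 1 := by
    ext u v
    simp only [Matrix.mul_apply, hE, Matrix.of_apply, Matrix.one_apply, mul_ite, mul_zero]
    rw [Finset.sum_ite_eq' Finset.univ v fun w => D u w * (D w w)⁻¹]
    simp only [Finset.mem_univ, if_true]
    by_cases h : u = v
    · subst h; simp [mul_inv_cancel₀ (hnz u)]
    · simp [h, hdiag u v h]
  -- Θ * Ξ = Ξ * D
  have hΘΞ : Θ * Ξ = Ξ * D := by
    rw [hdecomp, Matrix.mul_assoc (Ξ * D), horth, Matrix.mul_one]
  -- the block-structured matrices
  obtain ⟨U, hU⟩ : ∃ U : Matrix (Fin n) (Fin (K ^ 2)) ℝ,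
      U = Matrix.of (fun i u => if c i = (e.symm u).1 then Λ i (e.symm u).2 else 0) := ⟨_, rfl⟩
  obtain ⟨M, hM⟩ : ∃ M : Matrix (Fin (K ^ 2)) (Fin n) ℝ,
      M = Matrix.of (fun u j => if c j = (e.symm u).2 then Λ j (e.symm u).1 else 0) := ⟨_, rfl⟩
  have hΘUM : Θ = U * M := by
    ext i j
    rw [hΘ, Matrix.mul_apply, ← Equiv.sum_comp e fun u => U i u * M u j]
    simp only [hU, hM, Matrix.of_apply, Equiv.symm_apply_apply]
    rw [Fintype.sum_prod_type]
    simp [ite_mul, mul_ite, Finset.sum_ite_eq]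
  obtain ⟨Y, hY⟩ : ∃ Y : Matrix (Fin (K ^ 2)) (Fin (K ^ 2)) ℝ, Y = M * Ξ * E := ⟨_, rfl⟩
  have hΞUY : Ξ = U * Y := by
    rw [hY, ← Matrix.mul_assoc, ← Matrix.mul_assoc, ← hΘUM, hΘΞ, Matrix.mul_assoc, hDE,
      Matrix.mul_one]
  obtain ⟨G, hG⟩ : ∃ G : Matrix (Fin (K ^ 2)) (Fin (K ^ 2)) ℝ, G = Uᵀ * U := ⟨_, rfl⟩
  have hYGY : Yᵀ * G * Y = 1 := by
    rw [hG]
    calc Yᵀ * (Uᵀ * U) * Y = (U * Y)ᵀ * (U * Y) := by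
          rw [Matrix.transpose_mul U Y, Matrix.mul_assoc, Matrix.mul_assoc, Matrix.mul_assoc]
      _ = 1 := by rw [← hΞUY, horth]
  obtain ⟨W, hW⟩ : ∃ W : Matrix (Fin (K ^ 2)) (Fin (K ^ 2)) ℝ, W = Y * Yᵀ := ⟨_, rfl⟩
  have hGW : G * W = 1 := by
    have h1 : (Yᵀ * G) * Y = 1 := by rw [Matrix.mul_assoc] at hYGY ⊢; exact hYGY
    have h2 : Y * (Yᵀ * G) = 1 := mul_eq_one_comm.mp h1
    have h3 : W * G = 1 := by rw [hW, Matrix.mul_assoc]; exact h2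
    exact mul_eq_one_comm.mp h3
  have hWG : W * G = 1 := mul_eq_one_comm.mp hGW
  -- the community Gram matrices
  obtain ⟨Gk, hGk⟩ : ∃ Gk : Fin K → Matrix (Fin K) (Fin K) ℝ,
      Gk = fun k => (commBlock n K Λ c k)ᵀ * commBlock n K Λ c k := ⟨_, rfl⟩
  -- G is block diagonal with blocks Gk
  have hsumsub : ∀ (k : Fin K) (f : Fin n → ℝ),
      (∑ i, if c i = k then f i else 0) = ∑ i : {i : Fin n // c i = k}, f i.1 := by
    intro k f
    rw [← Finset.sum_filter (fun i => c i = k) f,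
      Finset.sum_subtype (p := fun i => c i = k) (Finset.filter (fun i => c i = k) Finset.univ)
        (by intro x; simp) f]
  have hGentry : ∀ p q : Fin K × Fin K,
      G (e p) (e q) = if p.1 = q.1 then Gk p.1 p.2 q.2 else 0 := by
    intro p q
    obtain ⟨k1, a⟩ := p
    obtain ⟨k2, b⟩ := q
    rw [hG, Matrix.mul_apply]
    simp only [Matrix.transpose_apply, hU, Matrix.of_apply, Equiv.symm_apply_apply]
    by_cases h : k1 = k2
    · subst h
      rw [if_pos rfl, hGk]
      simp only [Matrix.mul_apply, Matrix.transpose_apply, commBlock, Matrix.of_apply]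
      rw [← hsumsub k1 fun i => Λ i a * Λ i b]
      apply Finset.sum_congr rfl
      intro i _
      by_cases hi : c i = k1
      · simp [hi]
      · simp [hi]
    · rw [if_neg h]
      apply Finset.sum_eq_zero
      intro i _
      by_cases hi : c i = k1
      · rw [if_pos hi, if_neg (fun hq : c i = k2 => h (hi.symm.trans hq)), mul_zero]
      · rw [if_neg hi, zero_mul]
  -- diagonal blocks of W invert the Gk
  obtain ⟨X, hX⟩ : ∃ X : Fin K → Matrix (Fin K) (Fin K) ℝ,
      X = fun k => Matrix.of (fun a b => W (e (k, a)) (e (k, b))) := ⟨_, rfl⟩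
  have hGX : ∀ k, Gk k * X k = 1 := by
    intro k
    ext a b
    have h1 : (G * W) (e (k, a)) (e (k, b))
        = (1 : Matrix (Fin (K ^ 2)) (Fin (K ^ 2)) ℝ) (e (k, a)) (e (k, b)) := by rw [hGW]
    rw [Matrix.mul_apply, ← Equiv.sum_comp e fun u => G (e (k, a)) u * W u (e (k, b))] at h1
    rw [Fintype.sum_prod_type] at h1
    have h2 : ∀ k' : Fin K, ∑ l : Fin K, G (e (k, a)) (e (k', l)) * W (e (k', l)) (e (k, b))
        = if k = k' then ∑ l : Fin K, Gk k a l * W (e (k, l)) (e (k, b)) else 0 := by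
      intro k'
      by_cases h : k = k'
      · subst h
        rw [if_pos rfl]
        apply Finset.sum_congr rfl
        intro l _
        rw [hGentry (k, a) (k, l), if_pos rfl]
      · rw [if_neg h]
        apply Finset.sum_eq_zero
        intro l _
        rw [hGentry (k, a) (k', l), if_neg h, zero_mul]
    rw [Finset.sum_congr rfl (fun k' _ => h2 k'), Finset.sum_ite_eq Finset.univ k
      (fun _ => ∑ l : Fin K, Gk k a l * W (e (k, l)) (e (k, b)))] at h1
    simp only [Finset.mem_univ, if_true] at h1
    rw [Matrix.mul_apply]
    simp only [hX, Matrix.of_apply]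
    rw [h1, Matrix.one_apply, Matrix.one_apply]
    by_cases hab : a = b
    · subst hab; simp
    · rw [if_neg hab, if_neg (fun hh => hab (congrArg Prod.snd (e.injective hh)))]
  -- W equals the explicit block diagonal matrix H
  obtain ⟨H, hH⟩ : ∃ H : Matrix (Fin (K ^ 2)) (Fin (K ^ 2)) ℝ,
      H = Matrix.of (fun u v => if (e.symm u).1 = (e.symm v).1
        then X (e.symm u).1 (e.symm u).2 (e.symm v).2 else 0) := ⟨_, rfl⟩
  have hGH : G * H = 1 := by
    ext u v
    obtain ⟨p, rfl⟩ := e.surjective u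
    obtain ⟨q, rfl⟩ := e.surjective v
    rw [Matrix.mul_apply, ← Equiv.sum_comp e fun w => G (e p) w * H w (e q)]
    simp only [hH, Matrix.of_apply, Equiv.symm_apply_apply]
    rw [Fintype.sum_prod_type]
    have h2 : ∀ k' : Fin K, (∑ l : Fin K, G (e p) (e (k', l)) *
        (if k' = q.1 then X k' l q.2 else 0))
        = if p.1 = k' ∧ k' = q.1 then ∑ l : Fin K, Gk p.1 p.2 l * X p.1 l q.2 else 0 := by
      intro k'
      by_cases h : p.1 = k' ∧ k' = q.1
      · rw [if_pos h]
        apply Finset.sum_congr rfl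
        intro l _
        rw [hGentry p (k', l), if_pos h.1, if_pos h.2, ← h.1]
      · rw [if_neg h]
        apply Finset.sum_eq_zero
        intro l _
        by_cases h1 : p.1 = k'
        · rw [if_neg (fun hh => h ⟨h1, hh⟩), mul_zero]
        · rw [hGentry p (k', l), if_neg h1, zero_mul]
    rw [Finset.sum_congr rfl (fun k' _ => h2 k')]
    by_cases hpq : p.1 = q.1
    · have heq : ∀ k' : Fin K, (if p.1 = k' ∧ k' = q.1 then
          ∑ l : Fin K, Gk p.1 p.2 l * X p.1 l q.2 else 0)
          = if p.1 = k' then ∑ l : Fin K, Gk p.1 p.2 l * X p.1 l q.2 else 0 := by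
        intro k'
        by_cases h1 : p.1 = k'
        · rw [if_pos h1, if_pos ⟨h1, h1 ▸ hpq⟩]
        · rw [if_neg h1, if_neg (fun h => h1 h.1)]
      rw [Finset.sum_congr rfl (fun k' _ => heq k'),
        Finset.sum_ite_eq Finset.univ p.1
          (fun _ => ∑ l : Fin K, Gk p.1 p.2 l * X p.1 l q.2)]
      simp only [Finset.mem_univ, if_true]
      have hx : ∑ l : Fin K, Gk p.1 p.2 l * X p.1 l q.2 = (Gk p.1 * X p.1) p.2 q.2 := by
        rw [Matrix.mul_apply]
      rw [hx, hGX p.1, Matrix.one_apply, Matrix.one_apply]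
      by_cases h2 : p.2 = q.2
      · rw [if_pos h2, if_pos (congrArg e (Prod.ext hpq h2))]
      · rw [if_neg h2, if_neg (fun h => h2 (congrArg Prod.snd (e.injective h)))]
    · have heq : ∀ k' : Fin K, (if p.1 = k' ∧ k' = q.1 then
          ∑ l : Fin K, Gk p.1 p.2 l * X p.1 l q.2 else 0) = 0 := by
        intro k'
        rw [if_neg (fun h => hpq (h.1.trans h.2))]
      rw [Finset.sum_congr rfl (fun k' _ => heq k'), Finset.sum_const, smul_zero,
        Matrix.one_apply, if_neg (fun h => hpq (congrArg Prod.fst (e.injective h)))]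
  have hWH : W = H := by
    calc W = W * (G * H) := by rw [hGH, Matrix.mul_one]
      _ = (W * G) * H := by rw [Matrix.mul_assoc]
      _ = H := by rw [hWG, Matrix.one_mul]
  -- the answer
  refine ⟨fun k => Matrix.of (fun l u => Y (e (k, l)) u), ?_, ?_, ?_⟩
  · intro k i hik u
    rw [hΞUY, Matrix.mul_apply, ← Equiv.sum_comp e fun w => U i w * Y w u,
      Fintype.sum_prod_type]
    have heq : ∀ k' : Fin K, (∑ l : Fin K, U i (e (k', l)) * Y (e (k', l)) u)
        = if c i = k' then ∑ l : Fin K, Λ i l * Y (e (k', l)) u else 0 := by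
      intro k'
      by_cases h : c i = k'
      · rw [if_pos h]
        apply Finset.sum_congr rfl
        intro l _
        simp only [hU, Matrix.of_apply, Equiv.symm_apply_apply]
        rw [if_pos h]
      · rw [if_neg h]
        apply Finset.sum_eq_zero
        intro l _
        simp only [hU, Matrix.of_apply, Equiv.symm_apply_apply]
        rw [if_neg h, zero_mul]
    rw [Finset.sum_congr rfl (fun k' _ => heq k'),
      Finset.sum_ite_eq Finset.univ (c i) (fun k' => ∑ l : Fin K, Λ i l * Y (e (k', l)) u)]
    simp [hik]
  · intro k l hlk
    ext a b
    have hz : W (e (k, a)) (e (l, b)) = 0 := by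
      rw [hWH, hH]
      simp only [Matrix.of_apply, Equiv.symm_apply_apply]
      rw [if_neg (fun h => hlk h.symm)]
    rw [Matrix.mul_apply]
    simp only [Matrix.transpose_apply, Matrix.of_apply, Matrix.zero_apply]
    rw [hW, Matrix.mul_apply] at hz
    simpa [Matrix.transpose_apply] using hz
  · intro k
    have hinv : ((commBlock n K Λ c k)ᵀ * commBlock n K Λ c k)⁻¹ = X k := by
      rw [← congrFun hGk k]
      exact Matrix.inv_eq_right_inv (hGX k)
    rw [hinv]
    ext a b
    rw [Matrix.mul_apply]
    simp only [Matrix.transpose_apply, Matrix.of_apply, hX]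
    rw [hW, Matrix.mul_apply]
    simp [Matrix.transpose_apply]
end

section
/- Under the PABM with rank(Θ) = K², if nodes i and j belong to different communities (c(i) ≠ c(j)), then the i-th and j-th rows of the eigenvector matrix Ξ are orthogonal: ξ_i · ξ_j = 0. -/
/-!
`P = Ξ Ξᵀ` is a symmetric idempotent whose column space is that of `Θ = Ξ D Ξᵀ`. Counting
dimensions, this is the span of the `K²` vectors `λ⁽ˡ⁾` restricted to a community `k`, a subspace
invariant under the coordinate mask `M_k` of any community. A symmetric `M` leaving the range of a
symmetric idempotent `P` invariant commutes with it, and comparing the `(i, j)` entries of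
`M_{c(i)} P = P M_{c(i)}` gives `P i j = 0`.
-/

open Matrix

namespace Matrix

variable {m R : Type*} [CommRing R]

theorem mul_mul_eq_of_mapsTo_range [Fintype m] [DecidableEq m] {P M : Matrix m m R}
    (hP : P * P = P)
    (hM : ∀ x ∈ LinearMap.range P.mulVecLin, M *ᵥ x ∈ LinearMap.range P.mulVecLin) :
    P * M * P = M * P := by
  refine ext_iff_mulVec.2 fun y => ?_
  obtain ⟨z, hz : P *ᵥ z = M *ᵥ P *ᵥ y⟩ := hM _ ⟨y, rfl⟩
  rw [← mulVec_mulVec, ← mulVec_mulVec, ← mulVec_mulVec, ← hz, mulVec_mulVec, hP]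

theorem IsSymm.commute_of_mul_eq [Fintype m] {P M : Matrix m m R} (hP : P.IsSymm) (hM : M.IsSymm)
    (h : M * P = P * M * P) : Commute M P := by
  have h' : P * M = P * M * P := by
    simpa only [transpose_mul, hP.eq, hM.eq, Matrix.mul_assoc] using congrArg Matrix.transpose h
  exact h.trans h'.symm

theorem range_mulVecLin_mul_eq {r s : Type*} [Fintype r] [Fintype s] {A : Matrix m r R}
    {B : Matrix r s R} {C : Matrix s r R} (h : A * B * C = A) :
    LinearMap.range (A * B).mulVecLin = LinearMap.range A.mulVecLin := by
  refine le_antisymm ?_ ?_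
  · rw [mulVecLin_mul]
    exact LinearMap.range_comp_le_range _ _
  · conv_lhs => rw [← h, mulVecLin_mul]
    exact LinearMap.range_comp_le_range _ _

theorem range_mulVecLin_mul_mul_transpose [Fintype m] {r : Type*} [Fintype r] [DecidableEq r]
    {Ξ : Matrix m r R} {D : Matrix r r R} (hΞ : Ξᵀ * Ξ = 1) (hD : IsUnit D) :
    LinearMap.range (Ξ * D * Ξᵀ).mulVecLin = LinearMap.range (Ξ * Ξᵀ).mulVecLin := by
  obtain ⟨E, hDE⟩ := hD.exists_right_inv
  have hcancel : Ξ * (D * Ξᵀ) * (Ξ * E) = Ξ := by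
    rw [Matrix.mul_assoc, Matrix.mul_assoc, ← Matrix.mul_assoc Ξᵀ, hΞ, Matrix.one_mul, hDE,
      Matrix.mul_one]
  rw [Matrix.mul_assoc, range_mulVecLin_mul_eq hcancel,
    range_mulVecLin_mul_eq (C := Ξ) (by rw [Matrix.mul_assoc, hΞ, Matrix.mul_one])]

end Matrix

section PABM

variable {ι κ R : Type*} [DecidableEq κ] [Field R]

/-- The vector `λ⁽ˡ⁾` restricted to community `k`, for `p = (k, l)`. -/
def blockVec (c : ι → κ) (Λ : Matrix ι κ R) (p : κ × κ) : ι → R :=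
  fun i => if c i = p.1 then Λ i p.2 else 0

def blockSpan (c : ι → κ) (Λ : Matrix ι κ R) : Submodule R (ι → R) :=
  Submodule.span R (Set.range (blockVec c Λ))

def communityMask [DecidableEq ι] (c : ι → κ) (k : κ) : Matrix ι ι R :=
  diagonal fun i => if c i = k then 1 else 0

theorem col_eq_sum_blockVec [Fintype κ] {c : ι → κ} {Λ : Matrix ι κ R} {Θ : Matrix ι ι R}
    (hΘ : ∀ i j, Θ i j = Λ i (c j) * Λ j (c i)) (j : ι) :
    Θ.col j = ∑ k, Λ j k • blockVec c Λ (k, c j) := by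
  funext i
  simp [blockVec, hΘ, mul_comm]

theorem range_mulVecLin_le_blockSpan [Fintype ι] [Fintype κ] {c : ι → κ} {Λ : Matrix ι κ R}
    {Θ : Matrix ι ι R}
    (hΘ : ∀ i j, Θ i j = Λ i (c j) * Λ j (c i)) :
    LinearMap.range Θ.mulVecLin ≤ blockSpan c Λ := by
  rw [range_mulVecLin, Submodule.span_le]
  rintro _ ⟨j, rfl⟩
  rw [col_eq_sum_blockVec hΘ]
  exact Submodule.sum_mem _ fun k _ => Submodule.smul_mem _ _ (Submodule.subset_span ⟨_, rfl⟩)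

theorem finrank_blockSpan_le [Fintype κ] (c : ι → κ) (Λ : Matrix ι κ R) :
    Module.finrank R (blockSpan c Λ) ≤ Fintype.card κ ^ 2 :=
  (finrank_range_le_card (R := R) (blockVec c Λ)).trans_eq (by rw [Fintype.card_prod, sq])

theorem range_mulVecLin_eq_blockSpan [Fintype ι] [Fintype κ] {c : ι → κ} {Λ : Matrix ι κ R}
    {Θ : Matrix ι ι R}
    (hΘ : ∀ i j, Θ i j = Λ i (c j) * Λ j (c i)) (hrank : Θ.rank = Fintype.card κ ^ 2) :
    LinearMap.range Θ.mulVecLin = blockSpan c Λ :=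
  Submodule.eq_of_le_of_finrank_le (range_mulVecLin_le_blockSpan hΘ)
    ((finrank_blockSpan_le c Λ).trans hrank.ge)

theorem communityMask_mulVec_blockVec [Fintype ι] [DecidableEq ι] (c : ι → κ)
    (Λ : Matrix ι κ R) (k : κ) (p : κ × κ) :
    communityMask c k *ᵥ blockVec c Λ p = if p.1 = k then blockVec c Λ p else 0 := by
  funext i
  simp only [communityMask, blockVec, mulVec_diagonal]
  split_ifs <;> simp_all [blockVec]

theorem communityMask_mulVec_mem_blockSpan [Fintype ι] [DecidableEq ι] {c : ι → κ}
    {Λ : Matrix ι κ R} (k : κ) {x : ι → R} (hx : x ∈ blockSpan c Λ) :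
    communityMask c k *ᵥ x ∈ blockSpan c Λ := by
  suffices blockSpan c Λ ≤ (blockSpan c Λ).comap (communityMask c k).mulVecLin from this hx
  refine Submodule.span_le.2 ?_
  rintro _ ⟨p, rfl⟩
  change communityMask c k *ᵥ blockVec c Λ p ∈ blockSpan c Λ
  rw [communityMask_mulVec_blockVec]
  split_ifs
  · exact Submodule.subset_span ⟨p, rfl⟩
  · exact Submodule.zero_mem _

end PABM

theorem pabm_between_community_orthogonality_general (n K : ℕ)
    (Λ : Matrix (Fin n) (Fin K) ℝ) (c : Fin n → Fin K)
    (Θ : Matrix (Fin n) (Fin n) ℝ)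
    (hΘ : ∀ i j, Θ i j = Λ i (c j) * Λ j (c i))
    (hrank : Θ.rank = K ^ 2)
    (Ξ : Matrix (Fin n) (Fin (K ^ 2)) ℝ)
    (D : Matrix (Fin (K ^ 2)) (Fin (K ^ 2)) ℝ)
    (hdiag : ∀ u v, u ≠ v → D u v = 0) (hnz : ∀ u, D u u ≠ 0)
    (horth : Ξᵀ * Ξ = 1)
    (hdecomp : Θ = Ξ * D * Ξᵀ) :
    ∀ i j : Fin n, c i ≠ c j → ∑ u, Ξ i u * Ξ j u = 0 := by
  intro i j hij
  have hD : IsUnit D := by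
    rw [← IsDiag.diagonal_diag fun u v huv => hdiag u v huv, isUnit_diagonal, Pi.isUnit_iff]
    exact fun u => (hnz u).isUnit
  have hPP : Ξ * Ξᵀ * (Ξ * Ξᵀ) = Ξ * Ξᵀ := by
    rw [Matrix.mul_assoc, ← Matrix.mul_assoc Ξᵀ, horth, Matrix.one_mul]
  have hrange : LinearMap.range (Ξ * Ξᵀ).mulVecLin = blockSpan c Λ := by
    rw [← range_mulVecLin_mul_mul_transpose horth hD, ← hdecomp]
    exact range_mulVecLin_eq_blockSpan hΘ (by simpa using hrank)
  have hcomm : Commute (communityMask c (c i)) (Ξ * Ξᵀ) :=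
    IsSymm.commute_of_mul_eq (by simp [IsSymm, transpose_mul]) (isSymm_diagonal _)
      (mul_mul_eq_of_mapsTo_range hPP
        (hrange ▸ fun _ => communityMask_mulVec_mem_blockSpan _)).symm
  have hentry := congrFun (congrFun hcomm.eq i) j
  rw [communityMask, diagonal_mul, mul_diagonal] at hentry
  simpa [Ne.symm hij, mul_apply] using hentry

/-- Under the PABM with rank `K²`, rows of the eigenvector matrix corresponding to nodes
in different communities are orthogonal. -/
theorem pabm_between_community_orthogonality (n K : ℕ) (hK : 0 < K)
    (Λ : Matrix (Fin n) (Fin K) ℝ) (c : Fin n → Fin K)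
    (hΛ : ∀ i l, Λ i l ∈ Set.Icc (0 : ℝ) 1)
    (Θ : Matrix (Fin n) (Fin n) ℝ)
    (hΘ : ∀ i j, Θ i j = Λ i (c j) * Λ j (c i))
    (hrank : Θ.rank = K ^ 2)
    (Ξ : Matrix (Fin n) (Fin (K ^ 2)) ℝ)
    (D : Matrix (Fin (K ^ 2)) (Fin (K ^ 2)) ℝ)
    (hdiag : ∀ u v, u ≠ v → D u v = 0) (hnz : ∀ u, D u u ≠ 0)
    (horth : Ξᵀ * Ξ = 1)
    (hdecomp : Θ = Ξ * D * Ξᵀ) :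
    ∀ i j : Fin n, c i ≠ c j → ∑ u, Ξ i u * Ξ j u = 0 :=
  pabm_between_community_orthogonality_general n K Λ c Θ hΘ hrank Ξ D hdiag hnz horth hdecomp
end

section
/- The converse of between-community orthogonality fails: there exist n = 8, K = 2, a popularity matrix Λ ∈ [0,1]^{8×2}, and labels c with c(1)=…=c(4)=1, c(5)=…=c(8)=2, such that the PABM matrix Θ has rank 4, every λ_{i c(i)} > 0, yet the rows ξ_1 and ξ_3 of the eigenvector matrix Ξ satisfy ξ_1 · ξ_3 = 0 even though c(1) = c(3). Concretely, one may take Λ = (1/4)·[[2,2],[2,2],[2,1],[2,1],[1,4],[1,4],[2,4],[2,4]]. -/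
/-!
The PABM matrix is `Θ = Jᵀ M J`, where `J` is the membership matrix of the node pairs
`{1,2}, {3,4}, {5,6}, {7,8}` (nodes in a pair have identical rows of `Λ` and the same label) and
`M` is an invertible `4 × 4` matrix. Since `J Jᵀ = 2`, the column space of `Θ` is that of `Jᵀ`,
and `½ JᵀJ`, which averages over pairs, is a symmetric matrix `P` with `P Θ = Θ` and `P = Θ X`
for some `X`. So is `ΞΞᵀ` for every orthonormal `Ξ` with `Θ = Ξ D Ξᵀ`, `D` invertible. Two such
matrices `P, Q` satisfy `PQ = Q` and `QP = P`, hence coincide by symmetry, so `ΞΞᵀ = ½ JᵀJ`.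
Its `(1,3)` entry is `ξ₁ · ξ₃`, which vanishes because nodes 1 and 3 lie in different pairs,
although they lie in the same community.
-/

open Matrix

namespace Matrix

variable {K : Type*} [Field K] {k n : Type*} [Fintype k] [Fintype n] [DecidableEq k]

theorem IsDiag.isUnit {A : Matrix k k K} (hA : A.IsDiag) (h : ∀ i, A i i ≠ 0) : IsUnit A := by
  rw [← (isDiag_iff_diagonal_diag A).mp hA, isUnit_diagonal, Pi.isUnit_iff]
  exact fun i => (h i).isUnit

theorem IsSymm.eq_of_mul_eq_self_of_eq_mul {m : Type*} [Fintype m] {P Q : Matrix n n K}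
    {T : Matrix n m K} (hP : P.IsSymm) (hQ : Q.IsSymm) (hPT : P * T = T) (hQT : Q * T = T)
    (hTP : ∃ X : Matrix m n K, T * X = P) (hTQ : ∃ Y : Matrix m n K, T * Y = Q) : P = Q := by
  obtain ⟨X, hX⟩ := hTP
  obtain ⟨Y, hY⟩ := hTQ
  have hPQ : P * Q = Q := by rw [← hY, ← Matrix.mul_assoc, hPT]
  have hQP : Q * P = P := by rw [← hX, ← Matrix.mul_assoc, hQT]
  have hPQ' : P * Q = P := by
    simpa only [transpose_mul, hP.eq, hQ.eq] using congrArg Matrix.transpose hQP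
  rw [← hPQ', hPQ]

theorem mul_transpose_eq_of_eq_mul_mul_transpose {r : Type*} [Fintype r] [DecidableEq r]
    {Ξ : Matrix n r K} {D : Matrix r r K} {Q : Matrix n n K} (hΞ : Ξᵀ * Ξ = 1) (hD : IsUnit D)
    (hQ : Q.IsSymm) (hQΘ : Q * (Ξ * D * Ξᵀ) = Ξ * D * Ξᵀ)
    (hΘQ : ∃ X, Ξ * D * Ξᵀ * X = Q) : Ξ * Ξᵀ = Q := by
  refine IsSymm.eq_of_mul_eq_self_of_eq_mul
    (by rw [IsSymm, transpose_mul, transpose_transpose]) hQ ?_ hQΘ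
    ⟨Ξ * D⁻¹ * Ξᵀ, ?_⟩ hΘQ
  · calc Ξ * Ξᵀ * (Ξ * D * Ξᵀ) = Ξ * (Ξᵀ * Ξ) * D * Ξᵀ := by simp only [Matrix.mul_assoc]
      _ = Ξ * D * Ξᵀ := by rw [hΞ, Matrix.mul_one]
  · calc Ξ * D * Ξᵀ * (Ξ * D⁻¹ * Ξᵀ) = Ξ * (D * (Ξᵀ * Ξ) * D⁻¹) * Ξᵀ := by
          simp only [Matrix.mul_assoc]
      _ = Ξ * Ξᵀ := by
          rw [hΞ, Matrix.mul_one, mul_nonsing_inv _ ((isUnit_iff_isUnit_det D).mp hD),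
            Matrix.mul_one]

section BlockConstant

variable {J : Matrix k n K} {c : K}

theorem inv_smul_transpose_mul_self_mul_transpose_mul_mul (hJ : J * Jᵀ = c • 1) (hc : c ≠ 0)
    (M : Matrix k k K) : (c⁻¹ • (Jᵀ * J)) * (Jᵀ * M * J) = Jᵀ * M * J := by
  calc (c⁻¹ • (Jᵀ * J)) * (Jᵀ * M * J) = c⁻¹ • (Jᵀ * (J * Jᵀ) * M * J) := by
        simp only [smul_mul, Matrix.mul_assoc]
    _ = Jᵀ * M * J := by simp [hJ, smul_smul, hc]

theorem exists_transpose_mul_mul_mul_eq_inv_smul_transpose_mul_self (hJ : J * Jᵀ = c • 1)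
    {M : Matrix k k K} (hM : IsUnit M) :
    ∃ X, Jᵀ * M * J * X = c⁻¹ • (Jᵀ * J) := by
  have key : Jᵀ * M * J * (Jᵀ * M⁻¹ * J) = c • (Jᵀ * J) := by
    calc Jᵀ * M * J * (Jᵀ * M⁻¹ * J) = Jᵀ * (M * (J * Jᵀ) * M⁻¹) * J := by
          simp only [Matrix.mul_assoc]
      _ = c • (Jᵀ * J) := by
          rw [hJ, Matrix.mul_smul, Matrix.mul_one, Matrix.smul_mul,
            mul_nonsing_inv _ ((isUnit_iff_isUnit_det M).mp hM)]
          simp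
  refine ⟨(c⁻¹ ^ 2) • (Jᵀ * M⁻¹ * J), ?_⟩
  rw [Matrix.mul_smul, key, smul_smul]
  field_simp

theorem rank_transpose_mul_mul (hJ : J * Jᵀ = c • 1) (hc : c ≠ 0) {M : Matrix k k K}
    (hM : IsUnit M) : (Jᵀ * M * J).rank = Fintype.card k := by
  refine le_antisymm ((rank_mul_le_right _ _).trans (rank_le_card_height J)) ?_
  have hc1 : IsUnit (c • 1 : Matrix k k K) := (isUnit_iff_isUnit_det _).mpr (by simp [hc])
  have hunit : IsUnit (J * (Jᵀ * M * J) * Jᵀ) := by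
    rw [show J * (Jᵀ * M * J) * Jᵀ = J * Jᵀ * M * (J * Jᵀ) by simp only [Matrix.mul_assoc], hJ]
    exact (hc1.mul hM).mul hc1
  calc Fintype.card k = (J * (Jᵀ * M * J) * Jᵀ).rank := (rank_of_isUnit _ hunit).symm
    _ ≤ (J * (Jᵀ * M * J)).rank := rank_mul_le_left _ _
    _ ≤ (Jᵀ * M * J).rank := rank_mul_le_right _ _

end BlockConstant

end Matrix

noncomputable def pabmPopularity : Matrix (Fin 8) (Fin 2) ℝ :=
  (1 / 4 : ℝ) • !![2, 2; 2, 2; 2, 1; 2, 1; 1, 4; 1, 4; 2, 4; 2, 4]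

def pabmLabel : Fin 8 → Fin 2 := ![0, 0, 0, 0, 1, 1, 1, 1]

def pairMembership : Matrix (Fin 4) (Fin 8) ℝ :=
  !![1, 1, 0, 0, 0, 0, 0, 0;
    0, 0, 1, 1, 0, 0, 0, 0;
    0, 0, 0, 0, 1, 1, 0, 0;
    0, 0, 0, 0, 0, 0, 1, 1]

noncomputable def pairBlockMatrix : Matrix (Fin 4) (Fin 4) ℝ :=
  !![1/4, 1/4, 1/8, 1/4;
    1/4, 1/4, 1/16, 1/8;
    1/8, 1/16, 1, 1;
    1/4, 1/8, 1, 1]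

theorem pabm_eq_transpose_pairMembership_mul_mul {Θ : Matrix (Fin 8) (Fin 8) ℝ}
    (hΘ : ∀ i j, Θ i j = pabmPopularity i (pabmLabel j) * pabmPopularity j (pabmLabel i)) :
    Θ = pairMembershipᵀ * pairBlockMatrix * pairMembership := by
  ext i j
  rw [hΘ]
  fin_cases i <;> fin_cases j <;>
    simp [pabmPopularity, pabmLabel, pairMembership, pairBlockMatrix, mul_apply,
      Fin.sum_univ_four] <;> norm_num

theorem pairMembership_mul_transpose : pairMembership * pairMembershipᵀ = (2 : ℝ) • 1 := by
  ext a b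
  fin_cases a <;> fin_cases b <;> simp [pairMembership, mul_apply, Fin.sum_univ_eight] <;> norm_num

theorem isUnit_pairBlockMatrix : IsUnit pairBlockMatrix := by
  rw [isUnit_iff_isUnit_det, isUnit_iff_ne_zero, det_succ_row_zero]
  simp [pairBlockMatrix, Fin.sum_univ_four, det_fin_three, Fin.succAbove]
  norm_num

theorem transpose_pairMembership_mul_self_zero_two :
    (pairMembershipᵀ * pairMembership) 0 2 = 0 := by
  simp [pairMembership, mul_apply, Fin.sum_univ_four]

/-- Example 1: the converse of between-community orthogonality fails.  There are `n = 8`,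
`K = 2`, a popularity matrix and labels with rank-4 PABM matrix, all `λ_{i c(i)} > 0`,
such that rows 1 and 3 of any eigenvector matrix are orthogonal even though
nodes 1 and 3 are in the same community. -/
theorem pabm_orthogonality_converse_fails :
    ∃ (Λ : Matrix (Fin 8) (Fin 2) ℝ) (c : Fin 8 → Fin 2),
      Λ = (1 / 4 : ℝ) • !![2, 2; 2, 2; 2, 1; 2, 1; 1, 4; 1, 4; 2, 4; 2, 4] ∧
      (∀ i : Fin 8, c i = if (i : ℕ) < 4 then 0 else 1) ∧
      (∀ i l, Λ i l ∈ Set.Icc (0 : ℝ) 1) ∧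
      (∀ i, 0 < Λ i (c i)) ∧
      c 0 = c 2 ∧
      ∀ Θ : Matrix (Fin 8) (Fin 8) ℝ,
        (∀ i j, Θ i j = Λ i (c j) * Λ j (c i)) →
        Θ.rank = 4 ∧
        ∀ (Ξ : Matrix (Fin 8) (Fin 4) ℝ) (D : Matrix (Fin 4) (Fin 4) ℝ),
          (∀ u v, u ≠ v → D u v = 0) → (∀ u, D u u ≠ 0) →
          Ξᵀ * Ξ = 1 → Θ = Ξ * D * Ξᵀ →
          ∑ u, Ξ 0 u * Ξ 2 u = 0 := by
  refine ⟨pabmPopularity, pabmLabel, rfl, by decide, ?_, ?_, by decide, ?_⟩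
  · intro i l
    fin_cases i <;> fin_cases l <;> constructor <;> norm_num [pabmPopularity]
  · intro i
    fin_cases i <;> norm_num [pabmPopularity, pabmLabel]
  intro Θ hΘ
  obtain rfl := pabm_eq_transpose_pairMembership_mul_mul hΘ
  have hJ := pairMembership_mul_transpose
  refine ⟨rank_transpose_mul_mul hJ two_ne_zero isUnit_pairBlockMatrix,
    fun Ξ D hDdiag hDne hΞ hΘΞ => ?_⟩
  have hproj : Ξ * Ξᵀ = (2 : ℝ)⁻¹ • (pairMembershipᵀ * pairMembership) :=
    mul_transpose_eq_of_eq_mul_mul_transpose hΞ (IsDiag.isUnit hDdiag hDne)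
      (by rw [IsSymm, transpose_smul, transpose_mul, transpose_transpose])
      (hΘΞ ▸ inv_smul_transpose_mul_self_mul_transpose_mul_mul hJ two_ne_zero _)
      (hΘΞ ▸ exists_transpose_mul_mul_mul_eq_inv_smul_transpose_mul_self hJ
        isUnit_pairBlockMatrix)
  calc ∑ u, Ξ 0 u * Ξ 2 u = (Ξ * Ξᵀ) 0 2 := by simp only [mul_apply, transpose_apply]
    _ = 0 := by rw [hproj, Matrix.smul_apply, transpose_pairMembership_mul_self_zero_two, smul_zero]
end

section
/- Under the PABM with rank(Θ) = K², define for each community k the K×K positive definite matrix P_k = ((Λ^{(k,·)})^T Λ^{(k,·)})^{-1} and D_{P_k}(u,v) = u^T P_k v for u,v ∈ R^K. Let λ_i ∈ R^K denote the i-th row of Λ. Then for any nodes i,j in the same community k with ξ_i, ξ_j nonzero, the absolute cosine similarity satisfies |cos(ξ_i, ξ_j)| = |D_{P_k}(λ_i, λ_j)| / ( D_{P_k}(λ_i,λ_i)^{1/2} D_{P_k}(λ_j,λ_j)^{1/2} ), while for nodes in different communities cos(ξ_i, ξ_j) = 0. -/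
open Matrix

/-- `P_k = ((Λ^{(k,·)})ᵀ Λ^{(k,·)})⁻¹`. -/
noncomputable def Pmat (n K : ℕ) (Λ : Matrix (Fin n) (Fin K) ℝ) (c : Fin n → Fin K)
    (k : Fin K) : Matrix (Fin K) (Fin K) ℝ :=
  ((commBlock n K Λ c k)ᵀ * commBlock n K Λ c k)⁻¹

/-- `D_{P_k}(u, v) = uᵀ P_k v`. -/
noncomputable def DP (n K : ℕ) (Λ : Matrix (Fin n) (Fin K) ℝ) (c : Fin n → Fin K)
    (k : Fin K) (u v : Fin K → ℝ) : ℝ :=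
  u ⬝ᵥ (Pmat n K Λ c k *ᵥ v)

lemma gram_isUnit {ι m : Type*} [Fintype ι] [Fintype m] [DecidableEq m]
    (A : Matrix ι m ℝ) (hA : ∀ x : m → ℝ, A *ᵥ x = 0 → x = 0) : IsUnit (Aᵀ * A) := by
  rw [← Matrix.mulVec_injective_iff_isUnit]
  intro x y hxy
  have h0 : (Aᵀ * A) *ᵥ (x - y) = 0 := by
    rw [Matrix.mulVec_sub, hxy, sub_self]
  have h1 : (x - y) ⬝ᵥ ((Aᵀ * A) *ᵥ (x - y)) = (A *ᵥ (x - y)) ⬝ᵥ (A *ᵥ (x - y)) := by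
    rw [← Matrix.mulVec_mulVec, Matrix.dotProduct_mulVec, Matrix.vecMul_transpose]
  rw [h0, dotProduct_zero] at h1
  replace h1 := h1.symm
  have h2 : A *ᵥ (x - y) = 0 := dotProduct_self_eq_zero.mp h1
  exact sub_eq_zero.mp (hA _ h2)

lemma rank_ker {ι m : Type*} [Fintype ι] [Fintype m] [DecidableEq m]
    (A : Matrix ι m ℝ) (hr : A.rank = Fintype.card m) :
    ∀ x : m → ℝ, A *ᵥ x = 0 → x = 0 := by
  have h2 := LinearMap.finrank_range_add_finrank_ker A.mulVecLin
  rw [Module.finrank_pi] at h2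
  have h3 : Module.finrank ℝ (LinearMap.range A.mulVecLin) = Fintype.card m := hr
  have h4 : Module.finrank ℝ (LinearMap.ker A.mulVecLin) = 0 := by omega
  have h5 : LinearMap.ker A.mulVecLin = ⊥ := Submodule.finrank_eq_zero.mp h4
  intro x hx
  have : x ∈ LinearMap.ker A.mulVecLin := by simpa [Matrix.mulVecLin_apply] using hx
  simpa [h5] using this

/-- Corollary 1: angle-based similarity between eigenvector rows of the PABM. -/
theorem pabm_cosine_similarity (n K : ℕ) (hK : 0 < K)
    (Λ : Matrix (Fin n) (Fin K) ℝ) (c : Fin n → Fin K)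
    (Θ : Matrix (Fin n) (Fin n) ℝ)
    (hΘ : ∀ i j, Θ i j = Λ i (c j) * Λ j (c i))
    (hrank : Θ.rank = K ^ 2)
    (Ξ : Matrix (Fin n) (Fin (K ^ 2)) ℝ)
    (D : Matrix (Fin (K ^ 2)) (Fin (K ^ 2)) ℝ)
    (hdiag : ∀ u v, u ≠ v → D u v = 0) (hnz : ∀ u, D u u ≠ 0)
    (horth : Ξᵀ * Ξ = 1)
    (hdecomp : Θ = Ξ * D * Ξᵀ) :
    (∀ i j : Fin n, ∀ k : Fin K, c i = k → c j = k →
      (fun u => Ξ i u) ≠ 0 → (fun u => Ξ j u) ≠ 0 →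
      |(∑ u, Ξ i u * Ξ j u) /
          (Real.sqrt (∑ u, Ξ i u ^ 2) * Real.sqrt (∑ u, Ξ j u ^ 2))| =
        |DP n K Λ c k (fun l => Λ i l) (fun l => Λ j l)| /
          (Real.sqrt (DP n K Λ c k (fun l => Λ i l) (fun l => Λ i l)) *
            Real.sqrt (DP n K Λ c k (fun l => Λ j l) (fun l => Λ j l)))) ∧
    (∀ i j : Fin n, c i ≠ c j →
      (∑ u, Ξ i u * Ξ j u) /
          (Real.sqrt (∑ u, Ξ i u ^ 2) * Real.sqrt (∑ u, Ξ j u ^ 2)) = 0) := by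
  classical
  set L : Matrix (Fin n) (Fin K × Fin K) ℝ :=
    Matrix.of (fun i p => if c i = p.1 then Λ i p.2 else 0) with hLdef
  set L' : Matrix (Fin n) (Fin K × Fin K) ℝ :=
    Matrix.of (fun i p => if c i = p.2 then Λ i p.1 else 0) with hL'def
  -- factorization
  have hfact : Θ = L * L'ᵀ := by
    ext i j
    rw [hΘ, Matrix.mul_apply, Fintype.sum_prod_type]
    simp [hLdef, hL'def, ite_mul, mul_ite, Finset.sum_ite_eq, Finset.sum_ite_eq']
  -- L has full column rank
  have hcard : Fintype.card (Fin K × Fin K) = K ^ 2 := by simp [sq]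
  have hrankL : L.rank = Fintype.card (Fin K × Fin K) := by
    refine le_antisymm (Matrix.rank_le_card_width L) ?_
    rw [hcard, ← hrank, hfact]
    exact Matrix.rank_mul_le_left L L'ᵀ
  have hLker : ∀ x, L *ᵥ x = 0 → x = 0 := rank_ker L hrankL
  -- blocks have trivial kernel
  have hBker : ∀ (k : Fin K) (x : Fin K → ℝ), commBlock n K Λ c k *ᵥ x = 0 → x = 0 := by
    intro k x hx
    set y : Fin K × Fin K → ℝ := fun p => if p.1 = k then x p.2 else 0 with hy
    have hLy : L *ᵥ y = 0 := by
      ext i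
      by_cases hci : c i = k
      · have h := congrFun hx ⟨i, hci⟩
        simp only [commBlock, Matrix.mulVec, dotProduct, Matrix.of_apply,
          Pi.zero_apply] at h
        simp only [Matrix.mulVec, dotProduct, hLdef, hy, Matrix.of_apply,
          Fintype.sum_prod_type, Pi.zero_apply, ite_mul, mul_ite, mul_zero, zero_mul,
          Finset.sum_ite_eq, Finset.sum_ite_eq', Finset.mem_univ, if_true]
        simpa [hci] using h
      · simp only [Matrix.mulVec, dotProduct, hLdef, hy, Matrix.of_apply,
          Fintype.sum_prod_type, Pi.zero_apply, ite_mul, mul_ite, mul_zero, zero_mul,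
          Finset.sum_ite_eq, Finset.sum_ite_eq', Finset.mem_univ, if_true]
        simp [hci]
    have h0 := hLker y hLy
    funext l
    have := congrFun h0 (k, l)
    simpa [hy] using this
  have hWunit : ∀ k, IsUnit ((commBlock n K Λ c k)ᵀ * commBlock n K Λ c k) :=
    fun k => gram_isUnit _ (hBker k)
  -- L' also has trivial kernel
  have hL'ker : ∀ x, L' *ᵥ x = 0 → x = 0 := by
    intro x hx
    have hswap : L' *ᵥ x = L *ᵥ (fun p => x p.swap) := by
      ext i
      simp only [Matrix.mulVec, dotProduct]
      exact Fintype.sum_equiv (Equiv.prodComm (Fin K) (Fin K)) _ _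
        (fun p => by simp [hLdef, hL'def, mul_comm])
    have h0 := hLker _ (hswap ▸ hx)
    funext p
    have := congrFun h0 p.swap
    simpa using this
  have hG'unit : IsUnit (L'ᵀ * L') := gram_isUnit _ hL'ker
  have hGunit : IsUnit (Lᵀ * L) := gram_isUnit _ hLker
  set G : Matrix (Fin K × Fin K) (Fin K × Fin K) ℝ := Lᵀ * L with hGdef
  have hGdet : IsUnit G.det := (Matrix.isUnit_iff_isUnit_det _).mp hGunit
  have hG'det : IsUnit (L'ᵀ * L').det := (Matrix.isUnit_iff_isUnit_det _).mp hG'unit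
  -- Θ has a right factor recovering L
  have hΘS : Θ * (L' * (L'ᵀ * L')⁻¹) = L := by
    rw [hfact, Matrix.mul_assoc, ← Matrix.mul_assoc L'ᵀ,
      Matrix.mul_nonsing_inv _ hG'det, Matrix.mul_one]
  -- inverse of the diagonal matrix D
  set E : Matrix (Fin (K ^ 2)) (Fin (K ^ 2)) ℝ := Matrix.diagonal (fun u => (D u u)⁻¹) with hEdef
  have hDdiag : D = Matrix.diagonal (fun u => D u u) := by
    ext u v
    by_cases h : u = v
    · subst h; simp
    · simp [Matrix.diagonal, h, hdiag u v h]
  have hDE : D * E = 1 := by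
    rw [hDdiag, hEdef, Matrix.diagonal_mul_diagonal]
    have : (fun u => D u u * (D u u)⁻¹) = fun _ => (1 : ℝ) :=
      funext fun u => mul_inv_cancel₀ (hnz u)
    rw [this, Matrix.diagonal_one]
  -- projection identities
  have hMΘ : (Ξ * Ξᵀ) * Θ = Θ := by
    rw [hdecomp, Matrix.mul_assoc Ξ D Ξᵀ, Matrix.mul_assoc Ξ Ξᵀ, ← Matrix.mul_assoc Ξᵀ,
      horth, Matrix.one_mul]
  have hΞrec : Θ * (Ξ * E) = Ξ := by
    rw [hdecomp, Matrix.mul_assoc (Ξ * D), ← Matrix.mul_assoc Ξᵀ, horth, Matrix.one_mul,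
      Matrix.mul_assoc, hDE, Matrix.mul_one]
  have hMrec : Θ * ((Ξ * E) * Ξᵀ) = Ξ * Ξᵀ := by
    rw [← Matrix.mul_assoc, hΞrec]
  have hGinv : G⁻¹ * G = 1 := Matrix.nonsing_inv_mul G hGdet
  set Q : Matrix (Fin n) (Fin n) ℝ := L * G⁻¹ * Lᵀ with hQdef
  have hQL : Q * L = L := by
    rw [hQdef, Matrix.mul_assoc, ← hGdef, Matrix.mul_assoc, hGinv, Matrix.mul_one]
  have hQΘ : Q * Θ = Θ := by
    rw [hfact, ← Matrix.mul_assoc, hQL]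
  have hML : (Ξ * Ξᵀ) * L = L := by
    rw [← hΘS, ← Matrix.mul_assoc, hMΘ]
  have hMQ : (Ξ * Ξᵀ) * Q = Q := by
    rw [hQdef, ← Matrix.mul_assoc, ← Matrix.mul_assoc, hML]
  have hQM : Q * (Ξ * Ξᵀ) = Ξ * Ξᵀ := by
    rw [← hMrec, ← Matrix.mul_assoc, hQΘ]
  have hGT : Gᵀ = G := by rw [hGdef, Matrix.transpose_mul, Matrix.transpose_transpose]
  have hGinvT : (G⁻¹)ᵀ = G⁻¹ := by rw [Matrix.transpose_nonsing_inv, hGT]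
  have hQT : Qᵀ = Q := by
    rw [hQdef, Matrix.transpose_mul, Matrix.transpose_mul, Matrix.transpose_transpose,
      hGinvT, Matrix.mul_assoc]
  have hMT : (Ξ * Ξᵀ)ᵀ = Ξ * Ξᵀ := by
    rw [Matrix.transpose_mul, Matrix.transpose_transpose]
  have hMeqQ : Ξ * Ξᵀ = Q := by
    calc Ξ * Ξᵀ = Q * (Ξ * Ξᵀ) := hQM.symm
      _ = ((Ξ * Ξᵀ)ᵀ * Qᵀ)ᵀ := by rw [← Matrix.transpose_mul, Matrix.transpose_transpose]
      _ = ((Ξ * Ξᵀ) * Q)ᵀ := by rw [hMT, hQT]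
      _ = Qᵀ := by rw [hMQ]
      _ = Q := hQT
  -- subtype sums
  have hsub : ∀ (k : Fin K) (f : Fin n → ℝ),
      (∑ i : {i : Fin n // c i = k}, f i.1) = ∑ i, if c i = k then f i else 0 := by
    intro k f
    calc (∑ i : {i : Fin n // c i = k}, f i.1)
        = ∑ i ∈ Finset.univ.filter (fun i => c i = k), f i :=
          (Finset.sum_subtype _ (by simp) f).symm
      _ = ∑ i, if c i = k then f i else 0 := Finset.sum_filter _ _
  -- block structure of G
  have hGapp : ∀ p q : Fin K × Fin K, G p q =
      if p.1 = q.1 then ((commBlock n K Λ c p.1)ᵀ * commBlock n K Λ c p.1) p.2 q.2 else 0 := by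
    intro p q
    rw [hGdef, Matrix.mul_apply]
    simp only [Matrix.transpose_apply, hLdef, Matrix.of_apply]
    by_cases h : p.1 = q.1
    · rw [if_pos h, Matrix.mul_apply]
      simp only [Matrix.transpose_apply, commBlock, Matrix.of_apply]
      rw [hsub p.1 (fun i => Λ i p.2 * Λ i q.2)]
      refine Finset.sum_congr rfl (fun i _ => ?_)
      by_cases h1 : c i = p.1
      · simp [h1, h]
      · simp [h1]
    · rw [if_neg h]
      refine Finset.sum_eq_zero (fun i _ => ?_)
      by_cases h1 : c i = p.1
      · have : ¬ c i = q.1 := fun hh => h (h1 ▸ hh)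
        simp [this]
      · simp [h1]
  -- explicit inverse of G
  set H : Matrix (Fin K × Fin K) (Fin K × Fin K) ℝ :=
    Matrix.of (fun p q => if p.1 = q.1 then Pmat n K Λ c p.1 p.2 q.2 else 0) with hHdef
  have hGH : G * H = 1 := by
    ext ⟨k1, l1⟩ ⟨k2, l2⟩
    rw [Matrix.mul_apply, Fintype.sum_prod_type]
    simp only [hGapp, hHdef, Matrix.of_apply, ite_mul, mul_ite, zero_mul, mul_zero,
      Finset.sum_ite_eq, Finset.sum_ite_eq', Finset.mem_univ, if_true]
    have hterm : ∀ x : Fin K, (∑ x1 : Fin K, if x = k2 then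
        (if k1 = x then
          ((commBlock n K Λ c k1)ᵀ * commBlock n K Λ c k1) l1 x1 * Pmat n K Λ c x x1 l2
        else 0) else 0)
        = if x = k2 then (if k1 = x then
            (∑ x1 : Fin K,
              ((commBlock n K Λ c k1)ᵀ * commBlock n K Λ c k1) l1 x1 * Pmat n K Λ c x x1 l2)
          else 0) else 0 := by
      intro x
      by_cases h1 : x = k2 <;> by_cases h2 : k1 = x <;> simp [h1, h2]
    rw [Finset.sum_congr rfl (fun x _ => hterm x), Finset.sum_ite_eq' Finset.univ k2]
    simp only [Finset.mem_univ, if_true]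
    by_cases hk : k1 = k2
    · subst hk
      rw [if_pos rfl, ← Matrix.mul_apply]
      have hW1 : ((commBlock n K Λ c k1)ᵀ * commBlock n K Λ c k1) * Pmat n K Λ c k1 = 1 := by
        simp only [Pmat]
        exact Matrix.mul_nonsing_inv _ ((Matrix.isUnit_iff_isUnit_det _).mp (hWunit k1))
      rw [hW1]
      simp [Matrix.one_apply, Prod.ext_iff]
    · rw [if_neg hk]
      simp [Matrix.one_apply, Prod.ext_iff, hk]
  have hGinvH : G⁻¹ = H := Matrix.inv_eq_right_inv hGH
  -- entrywise formula for Q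
  have hQapp : ∀ i j, Q i j =
      if c i = c j then DP n K Λ c (c i) (fun l => Λ i l) (fun l => Λ j l) else 0 := by
    intro i j
    have h0 : Q i j = ∑ q, (∑ p, L i p * H p q) * Lᵀ q j := by
      rw [hQdef, hGinvH, Matrix.mul_apply]
      exact Finset.sum_congr rfl fun qq _ => by rw [Matrix.mul_apply]
    rw [h0]
    simp only [Matrix.transpose_apply, hLdef, hHdef, Matrix.of_apply, Fintype.sum_prod_type,
      ite_mul, mul_ite, zero_mul, mul_zero, Finset.sum_ite_eq, Finset.sum_ite_eq',
      Finset.mem_univ, if_true]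
    have hinner : ∀ (x x1 : Fin K),
        (∑ x2 : Fin K, ∑ x3 : Fin K, if x2 = x then
          (if c i = x2 then Λ i x3 * Pmat n K Λ c x2 x3 x1 else 0) else 0)
        = if c i = x then ∑ x3 : Fin K, Λ i x3 * Pmat n K Λ c x x3 x1 else 0 := by
      intro x x1
      calc (∑ x2 : Fin K, ∑ x3 : Fin K, if x2 = x then
              (if c i = x2 then Λ i x3 * Pmat n K Λ c x2 x3 x1 else 0) else 0)
          = ∑ x2 : Fin K, if x2 = x then
              (if c i = x2 then ∑ x3 : Fin K, Λ i x3 * Pmat n K Λ c x2 x3 x1 else 0) else 0 :=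
            Finset.sum_congr rfl (fun x2 _ => by
              by_cases h1 : x2 = x <;> by_cases h2 : c i = x2 <;> simp [h1, h2])
        _ = if c i = x then ∑ x3 : Fin K, Λ i x3 * Pmat n K Λ c x x3 x1 else 0 := by
            rw [Finset.sum_ite_eq' Finset.univ x]; simp
    calc (∑ x : Fin K, ∑ x1 : Fin K, if c j = x then
            (∑ x2 : Fin K, ∑ x3 : Fin K, if x2 = x then
              (if c i = x2 then Λ i x3 * Pmat n K Λ c x2 x3 x1 else 0) else 0) * Λ j x1 else 0)
        = ∑ x : Fin K, if c j = x then (if c i = x then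
            ∑ x1 : Fin K, (∑ x3 : Fin K, Λ i x3 * Pmat n K Λ c x x3 x1) * Λ j x1 else 0) else 0 := by
          refine Finset.sum_congr rfl (fun x _ => ?_)
          by_cases h1 : c j = x
          · simp only [h1, if_true, hinner]
            by_cases h2 : c i = x <;> simp [h2, Finset.sum_mul]
          · simp [h1]
      _ = if c i = c j then DP n K Λ c (c i) (fun l => Λ i l) (fun l => Λ j l) else 0 := by
          rw [Finset.sum_ite_eq Finset.univ (c j)]
          simp only [Finset.mem_univ, if_true]
          by_cases h : c i = c j
          · rw [if_pos (h ▸ rfl), if_pos h, ← h]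
            simp only [DP, dotProduct, Matrix.mulVec, Finset.sum_mul, Finset.mul_sum,
              mul_assoc]
            exact Finset.sum_comm
          · rw [if_neg (fun hh : c i = c j => h hh), if_neg h]
  -- key entry identity
  have key : ∀ i j, (∑ u, Ξ i u * Ξ j u) =
      if c i = c j then DP n K Λ c (c i) (fun l => Λ i l) (fun l => Λ j l) else 0 := by
    intro i j
    have h1 : (∑ u, Ξ i u * Ξ j u) = (Ξ * Ξᵀ) i j := by
      rw [Matrix.mul_apply]; simp [Matrix.transpose_apply]
    rw [h1, hMeqQ, hQapp]
  refine ⟨?_, ?_⟩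
  · intro i j k hik hjk _ _
    subst hik
    have hcc : c j = c i := hjk
    have hii := key i i; rw [if_pos rfl] at hii
    have hjj := key j j; rw [if_pos rfl, hcc] at hjj
    have hij := key i j; rw [if_pos hcc.symm] at hij
    have e2 : (∑ u, Ξ i u ^ 2) = DP n K Λ c (c i) (fun l => Λ i l) (fun l => Λ i l) := by
      rw [← hii]; exact Finset.sum_congr rfl (fun u _ => pow_two _)
    have e3 : (∑ u, Ξ j u ^ 2) = DP n K Λ c (c i) (fun l => Λ j l) (fun l => Λ j l) := by
      rw [← hjj]; exact Finset.sum_congr rfl (fun u _ => pow_two _)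
    rw [hij, e2, e3, abs_div,
      abs_of_nonneg (mul_nonneg (Real.sqrt_nonneg _) (Real.sqrt_nonneg _))]
  · intro i j hij
    rw [key i j, if_neg hij, zero_div]
end

section
/- Let θ_i^{(l)} = (Θ_{ij})_{j: c(j)=l} be the vector of edge probabilities from node i to nodes in community l. Suppose λ_{jk} > 0 for all j,k and that for each l the vectors {λ^{(l,k)}}_{k∈[K]} are pairwise non-parallel. Then for any two nodes i,j and any community l: cos(θ_i^{(l)}, θ_j^{(l)}) = 1 if c(i) = c(j), and cos(θ_i^{(l)}, θ_j^{(l)}) < 1 if c(i) ≠ c(j). -/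
/-!
In the PABM, `θ_i^{(l)} = λ_{il} · λ^{(l,c(i))}`, so by positivity of `λ_{il}` the cosine of
`θ_i^{(l)}` and `θ_j^{(l)}` is the cosine of the angle between `λ^{(l,c(i))}` and `λ^{(l,c(j))}`.
That angle vanishes when `c(i) = c(j)`, and otherwise it does not, since the two vectors are
not parallel.
-/

open InnerProductGeometry

/-- Cosine similarity of the edge-probability vectors `θ_i^{(l)}` and `θ_j^{(l)}`
(vectors indexed by the nodes of community `l`). -/
noncomputable def cosTheta (n K : ℕ) (Θ : Matrix (Fin n) (Fin n) ℝ) (c : Fin n → Fin K)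
    (i j : Fin n) (l : Fin K) : ℝ :=
  (∑ v : {v : Fin n // c v = l}, Θ i v.1 * Θ j v.1) /
    (Real.sqrt (∑ v : {v : Fin n // c v = l}, Θ i v.1 ^ 2) *
      Real.sqrt (∑ v : {v : Fin n // c v = l}, Θ j v.1 ^ 2))

theorem EuclideanSpace.cos_angle_toLp {ι : Type*} [Fintype ι] (u v : ι → ℝ) :
    Real.cos (angle (WithLp.toLp 2 u : EuclideanSpace ℝ ι) (WithLp.toLp 2 v)) =
      (∑ a, u a * v a) / (√(∑ a, u a ^ 2) * √(∑ a, v a ^ 2)) := by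
  simp only [cos_angle, EuclideanSpace.norm_eq, PiLp.inner_apply, Real.norm_eq_abs, sq_abs,
    RCLike.inner_apply, conj_trivial, mul_comm]

theorem angle_ne_zero_of_forall_ne_smul {V : Type*} [NormedAddCommGroup V]
    [InnerProductSpace ℝ V] {x y : V} (h : ∀ t : ℝ, y ≠ t • x) : angle x y ≠ 0 := by
  rw [Ne, angle_eq_zero_iff]
  rintro ⟨-, r, -, rfl⟩
  exact h r rfl

section PABM

variable {n K : ℕ} (Λ : Matrix (Fin n) (Fin K) ℝ) (c : Fin n → Fin K)

/-- The paper's `λ^{(l,k)} = (λ_{jk})_{j : c(j) = l}`. -/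
noncomputable def popularityVec (l k : Fin K) : EuclideanSpace ℝ {v : Fin n // c v = l} :=
  WithLp.toLp 2 fun v => Λ v.1 k

variable {Λ c}

theorem popularityVec_ne_zero (hpos : ∀ i k, 0 < Λ i k) {l : Fin K} (hl : ∃ i, c i = l)
    (k : Fin K) : popularityVec Λ c l k ≠ 0 := by
  obtain ⟨i, hi⟩ := hl
  intro h
  have : Λ i k = 0 := congrArg (fun w => w ⟨i, hi⟩) h
  exact (hpos i k).ne' this

theorem theta_eq_smul_popularityVec {Θ : Matrix (Fin n) (Fin n) ℝ}
    (hΘ : ∀ i j, Θ i j = Λ i (c j) * Λ j (c i)) (i : Fin n) (l : Fin K) :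
    (WithLp.toLp 2 fun v : {v : Fin n // c v = l} => Θ i v.1) =
      Λ i l • popularityVec Λ c l (c i) := by
  ext v
  simp [popularityVec, hΘ, v.2]

theorem popularityVec_ne_smul
    (hnonpar : ∀ l k k' : Fin K, k ≠ k' → ∀ t : ℝ,
      (fun v : {v : Fin n // c v = l} => Λ v.1 k') ≠
        t • (fun v : {v : Fin n // c v = l} => Λ v.1 k))
    {l k k' : Fin K} (hkk' : k ≠ k') (t : ℝ) :
    popularityVec Λ c l k' ≠ t • popularityVec Λ c l k := fun h =>
  hnonpar l k k' hkk' t (congrArg WithLp.ofLp h)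

end PABM

theorem pabm_theta_cosine_general (n K : ℕ)
    (Λ : Matrix (Fin n) (Fin K) ℝ) (c : Fin n → Fin K)
    (hpos : ∀ i k, 0 < Λ i k)
    (hne : ∀ k : Fin K, ∃ i, c i = k)
    (hnonpar : ∀ l k k' : Fin K, k ≠ k' → ∀ t : ℝ,
      (fun v : {v : Fin n // c v = l} => Λ v.1 k') ≠
        t • (fun v : {v : Fin n // c v = l} => Λ v.1 k))
    (Θ : Matrix (Fin n) (Fin n) ℝ)
    (hΘ : ∀ i j, Θ i j = Λ i (c j) * Λ j (c i)) :
    ∀ i j : Fin n, ∀ l : Fin K,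
      (c i = c j → cosTheta n K Θ c i j l = 1) ∧
      (c i ≠ c j → cosTheta n K Θ c i j l < 1) := by
  intro i j l
  have hcos : cosTheta n K Θ c i j l =
      Real.cos (angle (popularityVec Λ c l (c i)) (popularityVec Λ c l (c j))) := by
    rw [cosTheta, ← EuclideanSpace.cos_angle_toLp, theta_eq_smul_popularityVec hΘ,
      theta_eq_smul_popularityVec hΘ, angle_smul_left_of_pos _ _ (hpos i l),
      angle_smul_right_of_pos _ _ (hpos j l)]
  rw [hcos]
  refine ⟨fun hij => ?_, fun hij => ?_⟩
  · rw [hij, angle_self (popularityVec_ne_zero hpos (hne l) _), Real.cos_zero]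
  · refine (Real.cos_le_one _).lt_of_ne fun h => ?_
    exact angle_ne_zero_of_forall_ne_smul (popularityVec_ne_smul hnonpar hij)
      (cos_eq_one_iff_angle_eq_zero.mp h)

/-- Under positivity of all popularities and pairwise non-parallelism of the vectors
`λ^{(l,k)}`, `cos(θ_i^{(l)}, θ_j^{(l)}) = 1` iff `i, j` are in the same community,
and `< 1` otherwise. -/
theorem pabm_theta_cosine (n K : ℕ) (hK : 0 < K)
    (Λ : Matrix (Fin n) (Fin K) ℝ) (c : Fin n → Fin K)
    (hpos : ∀ i k, 0 < Λ i k)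
    (hne : ∀ k : Fin K, ∃ i, c i = k)
    (hnonpar : ∀ l k k' : Fin K, k ≠ k' → ∀ t : ℝ,
      (fun v : {v : Fin n // c v = l} => Λ v.1 k') ≠
        t • (fun v : {v : Fin n // c v = l} => Λ v.1 k))
    (Θ : Matrix (Fin n) (Fin n) ℝ)
    (hΘ : ∀ i j, Θ i j = Λ i (c j) * Λ j (c i)) :
    ∀ i j : Fin n, ∀ l : Fin K,
      (c i = c j → cosTheta n K Θ c i j l = 1) ∧
      (c i ≠ c j → cosTheta n K Θ c i j l < 1) :=
  pabm_theta_cosine_general n K Λ c hpos hne hnonpar Θ hΘ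
end

section
/- Let θ̄^{(k,l)} = (1/n_k) Σ_{v: c(v)=k} θ_v^{(l)} be the average edge-probability vector from community k to community l. Under positivity of all λ_{jk} and pairwise non-parallelism of {λ^{(l,k')}}_{k'∈[K]} for each l, we have cos(θ_i^{(l)}, θ̄^{(k,l)}) = 1 if c(i) = k, and cos(θ_i^{(l)}, θ̄^{(k,l)}) < 1 if c(i) ≠ k. Consequently, c(i) is the unique maximizer over k ∈ [K] of Σ_{l=1}^K cos(θ_i^{(l)}, θ̄^{(k,l)}). -/
/-!
On the nodes of community `l` the row `θ_i^{(l)}` is `Λ_{il} • λ^{(l,c(i))}` and `θ̄^{(k,l)}` is a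
positive multiple of `λ^{(l,k)}`, so `cos(θ_i^{(l)}, θ̄^{(k,l)}) = cos(λ^{(l,c(i))}, λ^{(l,k)})`.
This is `1` for `k = c(i)`; for `k ≠ c(i)` it is `< 1` by the equality case of Cauchy–Schwarz,
the two loading vectors not being parallel. Summing over `l` gives the maximizer statement.
-/

open Matrix

/-- The average edge-probability vector from community `k` to community `l`,
`θ̄^{(k,l)} = (1/n_k) Σ_{v : c(v)=k} θ_v^{(l)}`, evaluated at a node `j` of community `l`. -/
noncomputable def thetaBar (n K : ℕ) (Θ : Matrix (Fin n) (Fin n) ℝ) (c : Fin n → Fin K)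
    (k l : Fin K) (j : {j : Fin n // c j = l}) : ℝ :=
  (∑ v : {v : Fin n // c v = k}, Θ v.1 j.1) / (Fintype.card {v : Fin n // c v = k} : ℝ)

/-- Cosine similarity between `θ_i^{(l)}` and `θ̄^{(k,l)}`. -/
noncomputable def cosBar (n K : ℕ) (Θ : Matrix (Fin n) (Fin n) ℝ) (c : Fin n → Fin K)
    (i : Fin n) (k l : Fin K) : ℝ :=
  (∑ v : {v : Fin n // c v = l}, Θ i v.1 * thetaBar n K Θ c k l v) /
    (Real.sqrt (∑ v : {v : Fin n // c v = l}, Θ i v.1 ^ 2) *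
      Real.sqrt (∑ v : {v : Fin n // c v = l}, thetaBar n K Θ c k l v ^ 2))

open InnerProductGeometry

section CosineSimilarity

variable {ι : Type*} [Fintype ι]

noncomputable def cosSim (x y : ι → ℝ) : ℝ :=
  (∑ v, x v * y v) / (√(∑ v, x v ^ 2) * √(∑ v, y v ^ 2))

theorem cosSim_eq_cos_angle (x y : ι → ℝ) :
    cosSim x y = Real.cos (angle (WithLp.toLp 2 x : EuclideanSpace ℝ ι) (WithLp.toLp 2 y)) := by
  simp [cos_angle, cosSim, EuclideanSpace.norm_eq, EuclideanSpace.inner_toLp_toLp, dotProduct,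
    mul_comm]

theorem cosSim_smul_smul {a b : ℝ} (ha : 0 < a) (hb : 0 < b) (x y : ι → ℝ) :
    cosSim (a • x) (b • y) = cosSim x y := by
  simp only [cosSim_eq_cos_angle, WithLp.toLp_smul, angle_smul_left_of_pos _ _ ha,
    angle_smul_right_of_pos _ _ hb]

theorem cosSim_self {x : ι → ℝ} (hx : x ≠ 0) : cosSim x x = 1 := by
  rw [cosSim_eq_cos_angle, angle_self (by simpa using hx), Real.cos_zero]

theorem cosSim_lt_one {x y : ι → ℝ} (hxy : ∀ t : ℝ, y ≠ t • x) : cosSim x y < 1 := by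
  rw [cosSim_eq_cos_angle]
  refine (Real.cos_le_one _).lt_of_ne fun h => ?_
  obtain ⟨-, t, -, ht⟩ := angle_eq_zero_iff.mp (cos_eq_one_iff_angle_eq_zero.mp h)
  exact hxy t (by simpa using congrArg WithLp.ofLp ht)

end CosineSimilarity

section PABM

variable {n K : ℕ} {Λ : Matrix (Fin n) (Fin K) ℝ} {c : Fin n → Fin K}
  {Θ : Matrix (Fin n) (Fin n) ℝ}

theorem cosBar_eq_cosSim (i : Fin n) (k l : Fin K) :
    cosBar n K Θ c i k l =
      cosSim (fun v : {v : Fin n // c v = l} => Θ i v.1) (thetaBar n K Θ c k l) :=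
  rfl

theorem row_restrict_eq_smul (hΘ : ∀ i j, Θ i j = Λ i (c j) * Λ j (c i)) (i : Fin n)
    (l : Fin K) :
    (fun v : {v : Fin n // c v = l} => Θ i v.1) = Λ i l • fun v => Λ v.1 (c i) := by
  ext v
  simp [hΘ, v.2]

theorem thetaBar_eq_smul (hΘ : ∀ i j, Θ i j = Λ i (c j) * Λ j (c i)) (k l : Fin K) :
    thetaBar n K Θ c k l =
      ((∑ u : {u : Fin n // c u = k}, Λ u.1 l) / Fintype.card {u : Fin n // c u = k}) •
        fun v => Λ v.1 k := by
  ext v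
  have hsum : ∑ u : {u : Fin n // c u = k}, Θ u.1 v.1 =
      (∑ u : {u : Fin n // c u = k}, Λ u.1 l) * Λ v.1 k := by
    rw [Finset.sum_mul]
    exact Finset.sum_congr rfl fun u _ => by rw [hΘ, u.2, v.2]
  rw [thetaBar, hsum, Pi.smul_apply, smul_eq_mul]
  ring

theorem cosBar_eq_cosSim_loadings (hΘ : ∀ i j, Θ i j = Λ i (c j) * Λ j (c i))
    (hpos : ∀ i k, 0 < Λ i k) {k : Fin K} (hk : ∃ u, c u = k) (i : Fin n) (l : Fin K) :
    cosBar n K Θ c i k l =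
      cosSim (fun v : {v : Fin n // c v = l} => Λ v.1 (c i)) (fun v => Λ v.1 k) := by
  obtain ⟨u, hu⟩ := hk
  have : Nonempty {u : Fin n // c u = k} := ⟨⟨u, hu⟩⟩
  have hmean :
      0 < (∑ u : {u : Fin n // c u = k}, Λ u.1 l) / Fintype.card {u : Fin n // c u = k} :=
    div_pos (Finset.sum_pos (fun u _ => hpos u.1 l) Finset.univ_nonempty)
      (Nat.cast_pos.mpr Fintype.card_pos)
  rw [cosBar_eq_cosSim, row_restrict_eq_smul hΘ, thetaBar_eq_smul hΘ,
    cosSim_smul_smul (hpos i l) hmean]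

end PABM

theorem pabm_thetaBar_cosine_general (n K : ℕ)
    (Λ : Matrix (Fin n) (Fin K) ℝ) (c : Fin n → Fin K)
    (hpos : ∀ i k, 0 < Λ i k)
    (hne : ∀ k : Fin K, ∃ i, c i = k)
    (hnonpar : ∀ l k k' : Fin K, k ≠ k' → ∀ t : ℝ,
      (fun v : {v : Fin n // c v = l} => Λ v.1 k') ≠
        t • (fun v : {v : Fin n // c v = l} => Λ v.1 k))
    (Θ : Matrix (Fin n) (Fin n) ℝ)
    (hΘ : ∀ i j, Θ i j = Λ i (c j) * Λ j (c i)) :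
    ∀ i : Fin n,
      (∀ l : Fin K, cosBar n K Θ c i (c i) l = 1) ∧
      (∀ k l : Fin K, c i ≠ k → cosBar n K Θ c i k l < 1) ∧
      (∀ k : Fin K, k ≠ c i →
        ∑ l, cosBar n K Θ c i k l < ∑ l, cosBar n K Θ c i (c i) l) := by
  intro i
  have hself (l : Fin K) : cosBar n K Θ c i (c i) l = 1 := by
    obtain ⟨u, hu⟩ := hne l
    rw [cosBar_eq_cosSim_loadings hΘ hpos (hne _), cosSim_self]
    exact fun h => (hpos u (c i)).ne' (congrFun h ⟨u, hu⟩)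
  have hlt (k l : Fin K) (hk : c i ≠ k) : cosBar n K Θ c i k l < 1 := by
    rw [cosBar_eq_cosSim_loadings hΘ hpos (hne k)]
    exact cosSim_lt_one (hnonpar l (c i) k hk)
  refine ⟨hself, hlt, fun k hk => Finset.sum_lt_sum_of_nonempty ⟨c i, Finset.mem_univ _⟩ ?_⟩
  exact fun l _ => (hself l).symm ▸ hlt k l (Ne.symm hk)

/-- `cos(θ_i^{(l)}, θ̄^{(k,l)}) = 1` iff `c(i) = k`, `< 1` otherwise; hence `c(i)` is the
unique maximizer of `k ↦ Σ_l cos(θ_i^{(l)}, θ̄^{(k,l)})`. -/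
theorem pabm_thetaBar_cosine (n K : ℕ) (hK : 0 < K)
    (Λ : Matrix (Fin n) (Fin K) ℝ) (c : Fin n → Fin K)
    (hpos : ∀ i k, 0 < Λ i k)
    (hne : ∀ k : Fin K, ∃ i, c i = k)
    (hnonpar : ∀ l k k' : Fin K, k ≠ k' → ∀ t : ℝ,
      (fun v : {v : Fin n // c v = l} => Λ v.1 k') ≠
        t • (fun v : {v : Fin n // c v = l} => Λ v.1 k))
    (Θ : Matrix (Fin n) (Fin n) ℝ)
    (hΘ : ∀ i j, Θ i j = Λ i (c j) * Λ j (c i)) :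
    ∀ i : Fin n,
      (∀ l : Fin K, cosBar n K Θ c i (c i) l = 1) ∧
      (∀ k l : Fin K, c i ≠ k → cosBar n K Θ c i k l < 1) ∧
      (∀ k : Fin K, k ≠ c i →
        ∑ l, cosBar n K Θ c i k l < ∑ l, cosBar n K Θ c i (c i) l) :=
  pabm_thetaBar_cosine_general n K Λ c hpos hne hnonpar Θ hΘ
end
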